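/- If two graphs G₁ and G₂ have equal multisets of diagonal k-WL colors, then the vertex-color multisets produced by 1-WL refinement initialized with Δ(k-WL) remain equal after every number of iterations; that is, the 1-WL message passing iterations add no distinguishing information beyond the initial coloring Δ(k-WL). -/

import Mathlib

def WLType (α : Type) : ℕ → Type
  | 0 => α
  | n + 1 => WLType α n × Multiset (WLType α n)

open Classical in
/-- `n` rounds of 1-WL refinement: `C'(v) = (C(v), {{C(x) : x ∈ N(v)}})`. -/
noncomputable def wl {V : Type} [Fintype V] {α : Type} (G : SimpleGraph V) (C : V → α) :
    (n : ℕ) → V → WLType α n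
  | 0 => C
  | n + 1 => fun v =>
      (wl G C n v, Multiset.map (wl G C n) (Finset.univ.val.filter (fun x => G.Adj v x)))

/-- The multiset of 1-WL colors of all vertices after `n` rounds. -/
noncomputable def wlColors {V : Type} [Fintype V] {α : Type} (G : SimpleGraph V)
    (C : V → α) (n : ℕ) : Multiset (WLType α n) :=
  Finset.univ.val.map (wl G C n)

def kInit {V : Type} (G : SimpleGraph V) (k : ℕ) (t : Fin k → V) :
    (Fin k → Fin k → Prop) × (Fin k → Fin k → Prop) :=
  (fun i j => t i = t j, fun i j => G.Adj (t i) (t j))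

def KWLType (k : ℕ) : ℕ → Type
  | 0 => (Fin k → Fin k → Prop) × (Fin k → Fin k → Prop)
  | n + 1 => KWLType k n × (Fin k → Multiset (KWLType k n))

def kwl {V : Type} [Fintype V] (G : SimpleGraph V) (k : ℕ) :
    (n : ℕ) → (Fin k → V) → KWLType k n
  | 0 => kInit G k
  | n + 1 => fun t => (kwl G k n t,
      fun j => Finset.univ.val.map (fun w => kwl G k n (Function.update t j w)))

/-- A number of `k`-WL iterations after which the coloring of the disjoint union of
`G₁` and `G₂` is guaranteed to have stabilized. -/
def stableSteps (V₁ V₂ : Type) [Fintype V₁] [Fintype V₂] (k : ℕ) : ℕ :=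
  Fintype.card ((Fin k → V₁) ⊕ (Fin k → V₂))

/-- The stable diagonal `k`-WL coloring `Δ(k-WL)(v) = C_{k-WL}(v,…,v)`, computed for the
pair `(G₁, G₂)` (the stabilization number of iterations is that of the pair). -/
def kwlDiag {V₁ V₂ V : Type} [Fintype V₁] [Fintype V₂] [Fintype V]
    (G : SimpleGraph V) (k : ℕ) (v : V) : KWLType k (stableSteps V₁ V₂ k) :=
  kwl G k (stableSteps V₁ V₂ k) (fun _ => v)

/-!
Once the joint `k`-WL coloring of the two graphs is stable, the color of a tuple determines,
for every coordinate `i`, the multiset of colors of the tuples obtained by changing coordinate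
`i`. Filtering that multiset by the equality type picks out the tuple whose `i`-th entry is
copied from its `j`-th one, so, overwriting coordinates one by one, the color of a tuple
determines the colors of the constant tuples on each of its entries. Applied to
`(v, …, v)` with one coordinate changed and filtered by the adjacency type, this says that
`Δ(k-WL)` is equitable: vertices with equal `Δ`-colors have equal multisets of `Δ`-colors of
neighbors. An equitable coloring is never refined by 1-WL.
-/

theorem Multiset.map_eq_map_of_imp {α β γ δ : Type*} {s : Multiset α} {t : Multiset β}
    {f : α → γ} {g : β → γ} {f' : α → δ} {g' : β → δ} (h : s.map f = t.map g)
    (hfg : ∀ a b, f a = g b → f' a = g' b) : s.map f' = t.map g' := by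
  rw [← Multiset.rel_eq, Multiset.rel_map] at h ⊢
  exact h.mono fun a _ b _ => hfg a b

section Stabilization

variable {X : Type*} [Fintype X] {β : ℕ → Type*} (c : ∀ n, X → β n)
  (π : ∀ n, β (n + 1) → β n)

theorem ncard_range_lt_ncard_range_succ (hπ : ∀ n x, π n (c (n + 1) x) = c n x) {n : ℕ}
    (h : ¬ ∀ x y, c n x = c n y → c (n + 1) x = c (n + 1) y) :
    (Set.range (c n)).ncard < (Set.range (c (n + 1))).ncard := by
  have hrange : Set.range (c n) = π n '' Set.range (c (n + 1)) := by
    rw [← Set.range_comp]; exact congrArg Set.range (funext fun x => (hπ n x).symm)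
  rw [hrange]
  refine (Set.ncard_image_le).lt_of_ne fun heq => h fun x y hxy => ?_
  refine Set.injOn_of_ncard_image_eq heq (Set.toFinite _) (Set.mem_range_self x)
    (Set.mem_range_self y) ?_
  simpa only [hπ] using hxy

/-- The number of colors never drops (`π` forgets the last round) and grows strictly at every
round that is not yet stable, but it is bounded by `Fintype.card X`. -/
theorem exists_le_card_forall_eq_succ (hπ : ∀ n x, π n (c (n + 1) x) = c n x) :
    ∃ n ≤ Fintype.card X, ∀ x y, c n x = c n y → c (n + 1) x = c (n + 1) y := by
  by_contra! hunstable
  have hgrow : ∀ n ≤ Fintype.card X + 1, n ≤ (Set.range (c n)).ncard := by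
    intro n
    induction n with
    | zero => simp
    | succ n ih =>
      intro hn
      have := ncard_range_lt_ncard_range_succ c π hπ (n := n) (by
        obtain ⟨x, y, hxy, hne⟩ := hunstable n (by omega)
        exact fun hinj => hne (hinj x y hxy))
      have := ih (by omega)
      omega
  have hbound := Set.ncard_image_le (f := c (Fintype.card X + 1)) (s := Set.univ)
  rw [Set.image_univ, Set.ncard_univ, Nat.card_eq_fintype_card] at hbound
  have := hgrow _ le_rfl
  omega

end Stabilization

section OneWL

open Classical

variable {V₁ V₂ α : Type} [Fintype V₁] [Fintype V₂] {G₁ : SimpleGraph V₁} {G₂ : SimpleGraph V₂}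
  {C₁ : V₁ → α} {C₂ : V₂ → α}

theorem wl_eq_of_map_neighbors_eq
    (hC : ∀ v w, C₁ v = C₂ w → (Finset.univ.val.filter (G₁.Adj v)).map C₁ =
      (Finset.univ.val.filter (G₂.Adj w)).map C₂) (m : ℕ) {v : V₁} {w : V₂}
    (hvw : C₁ v = C₂ w) : wl G₁ C₁ m v = wl G₂ C₂ m w := by
  induction m generalizing v w with
  | zero => exact hvw
  | succ m ih =>
    exact Prod.ext (ih hvw) (Multiset.map_eq_map_of_imp (hC v w hvw) fun _ _ => ih)

theorem wlColors_eq_of_map_neighbors_eq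
    (hC : ∀ v w, C₁ v = C₂ w → (Finset.univ.val.filter (G₁.Adj v)).map C₁ =
      (Finset.univ.val.filter (G₂.Adj w)).map C₂)
    (hcolors : Finset.univ.val.map C₁ = Finset.univ.val.map C₂) (m : ℕ) :
    wlColors G₁ C₁ m = wlColors G₂ C₂ m :=
  Multiset.map_eq_map_of_imp hcolors fun _ _ => wl_eq_of_map_neighbors_eq hC m

end OneWL

def KWLType.toInit {k : ℕ} : (n : ℕ) → KWLType k n → KWLType k 0
  | 0, c => c
  | n + 1, c => toInit n c.1

theorem Finset.univ_val_filter_eq {α : Type*} [Fintype α] (a : α) [DecidablePred (· = a)] :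
    Finset.univ.val.filter (· = a) = {a} := by
  classical
  convert Multiset.filter_eq' Finset.univ.val a
  rw [Multiset.count_univ, Multiset.replicate_one]

section KWL

variable {V₁ V₂ : Type} [Fintype V₁] [Fintype V₂] {G₁ : SimpleGraph V₁} {G₂ : SimpleGraph V₂}
  {k n : ℕ}

theorem kwl_toInit {V : Type} [Fintype V] (G : SimpleGraph V) (k n : ℕ) (t : Fin k → V) :
    (kwl G k n t).toInit n = kInit G k t := by
  induction n with
  | zero => rfl
  | succ n ih => exact ih

theorem map_kwl_update_eq {s : Fin k → V₁} {t : Fin k → V₂}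
    (h : kwl G₁ k (n + 1) s = kwl G₂ k (n + 1) t) (j : Fin k) :
    Finset.univ.val.map (fun u => kwl G₁ k n (Function.update s j u)) =
      Finset.univ.val.map (fun u => kwl G₂ k n (Function.update t j u)) :=
  congrFun (congrArg Prod.snd h) j

variable (G₁ G₂ k) in
def KWLStableAt (n : ℕ) : Prop :=
  ∀ (s : Fin k → V₁) (t : Fin k → V₂), kwl G₁ k n s = kwl G₂ k n t →
    kwl G₁ k (n + 1) s = kwl G₂ k (n + 1) t

theorem KWLStableAt.succ (h : KWLStableAt G₁ G₂ k n) : KWLStableAt G₁ G₂ k (n + 1) :=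
  fun _ _ hst => Prod.ext hst <| funext fun j =>
    Multiset.map_eq_map_of_imp (map_kwl_update_eq hst j) fun _ _ => h _ _

theorem KWLStableAt.mono {m : ℕ} (h : KWLStableAt G₁ G₂ k n) (hnm : n ≤ m) :
    KWLStableAt G₁ G₂ k m := by
  induction m, hnm using Nat.le_induction with
  | base => exact h
  | succ m _ ih => exact ih.succ

variable (G₁ G₂ k) in
theorem kwlStableAt_stableSteps : KWLStableAt G₁ G₂ k (stableSteps V₁ V₂ k) := by
  obtain ⟨n, hn, hstable⟩ := exists_le_card_forall_eq_succ
    (fun n => Sum.elim (kwl G₁ k n) (kwl G₂ k n)) (fun _ => Prod.fst)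
    (by rintro n (_ | _) <;> rfl)
  exact KWLStableAt.mono (fun s t => hstable (.inl s) (.inr t)) hn

open Classical in
theorem KWLStableAt.kwl_update_self_eq (hN : KWLStableAt G₁ G₂ k n) {s : Fin k → V₁}
    {t : Fin k → V₂} (h : kwl G₁ k n s = kwl G₂ k n t) (i j : Fin k) :
    kwl G₁ k n (Function.update s i (s j)) = kwl G₂ k n (Function.update t i (t j)) := by
  rcases eq_or_ne i j with rfl | hij
  · simpa only [Function.update_eq_self] using h
  -- the only modification of coordinate `i` that matches coordinate `j` is `update s i (s j)`
  have hmap := congrArg (Multiset.filter fun c => (c.toInit n).1 i j)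
    (map_kwl_update_eq (hN s t h) i)
  simp only [Multiset.filter_map, Function.comp_def, kwl_toInit, kInit, Function.update_self,
    Function.update_of_ne hij.symm, Finset.univ_val_filter_eq] at hmap
  simpa using hmap

theorem KWLStableAt.kwl_const_eq (hN : KWLStableAt G₁ G₂ k n) {s : Fin k → V₁}
    {t : Fin k → V₂} (h : kwl G₁ k n s = kwl G₂ k n t) (j : Fin k) :
    kwl G₁ k n (fun _ => s j) = kwl G₂ k n (fun _ => t j) := by
  classical
  have hfill : ∀ S : Finset (Fin k), kwl G₁ k n (S.piecewise (fun _ => s j) s) =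
      kwl G₂ k n (S.piecewise (fun _ => t j) t) := by
    intro S
    induction S using Finset.induction_on with
    | empty => simpa using h
    | insert i S _ ih =>
      have := hN.kwl_update_self_eq ih i j
      rwa [S.piecewise_cases (fun _ => s j) s (· = s j) rfl rfl,
        S.piecewise_cases (fun _ => t j) t (· = t j) rfl rfl,
        ← Finset.piecewise_insert, ← Finset.piecewise_insert] at this
  simpa using hfill Finset.univ

open Classical in
theorem KWLStableAt.map_neighbors_kwl_const_eq (hN : KWLStableAt G₁ G₂ k n) (hk : 2 ≤ k)
    {v : V₁} {w : V₂} (h : kwl G₁ k n (fun _ => v) = kwl G₂ k n (fun _ => w)) :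
    (Finset.univ.val.filter (G₁.Adj v)).map (fun u => kwl G₁ k n (fun _ => u)) =
      (Finset.univ.val.filter (G₂.Adj w)).map (fun u => kwl G₂ k n (fun _ => u)) := by
  let i₀ : Fin k := ⟨0, by omega⟩
  let i₁ : Fin k := ⟨1, by omega⟩
  have hne : i₀ ≠ i₁ := by simp [i₀, i₁, Fin.ext_iff]
  have hmap := congrArg (Multiset.filter fun c => (c.toInit n).2 i₀ i₁)
    (map_kwl_update_eq (hN _ _ h) i₁)
  simp only [Multiset.filter_map, Function.comp_def, kwl_toInit, kInit, Function.update_self,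
    Function.update_of_ne hne] at hmap
  refine Multiset.map_eq_map_of_imp hmap fun u u' huu' => ?_
  simpa using hN.kwl_const_eq huu' i₁

end KWL

/-- If `G₁` and `G₂` have equal multisets of diagonal stable `k`-WL
colors, then the vertex-color multisets produced by 1-WL refinement initialized with
`Δ(k-WL)` remain equal after every number of iterations: the 1-WL message passing adds
no distinguishing information beyond the initial coloring `Δ(k-WL)`. -/
theorem wl_on_kwlDiag_adds_nothing
    {V₁ V₂ : Type} [Fintype V₁] [Fintype V₂]
    (G₁ : SimpleGraph V₁) (G₂ : SimpleGraph V₂) (k : ℕ) (hk : 2 ≤ k)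
    (hdiag : Finset.univ.val.map (kwlDiag (V₁ := V₁) (V₂ := V₂) G₁ k) =
      Finset.univ.val.map (kwlDiag (V₁ := V₁) (V₂ := V₂) G₂ k)) :
    ∀ m : ℕ, wlColors G₁ (kwlDiag (V₁ := V₁) (V₂ := V₂) G₁ k) m =
      wlColors G₂ (kwlDiag (V₁ := V₁) (V₂ := V₂) G₂ k) m :=
  wlColors_eq_of_map_neighbors_eq
    (fun _ _ => (kwlStableAt_stableSteps G₁ G₂ k).map_neighbors_kwl_const_eq hk) hdiag
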